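/- arXiv:1707.09908 — 2 statements merged into one kernel-verified Lean document; each statement's English description precedes it below -/
import Mathlib

section
/- Let T be an unrooted binary phylogenetic tree with leaf set X, |X| = n, and strictly positive edge weights w : E(T) → ℝ_{>0}. For 1 ≤ k ≤ n let pd_k = max{ PD(W) : W ⊆ X, |W| = k }. Let 2 ≤ k ≤ n and let x_1,…,x_k be distinct leaves such that PD({x_1, x_2}) = max{ PD({a,b}) : a, b ∈ X, a ≠ b } and, for each j with 2 ≤ j ≤ k−1, PD({x_1,…,x_j, x_{j+1}}) = max{ PD({x_1,…,x_j} ∪ {x}) : x ∈ X \ {x_1,…,x_j} }. Then PD({x_1,…,x_k}) = pd_k; moreover, every W ⊆ X with |W| = k and PD(W) = pd_k arises in this way, i.e., W can be ordered as such a greedy sequence. -/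
open Finset

noncomputable section
open scoped Classical

/-- The set of leaves (degree-1 vertices) of a graph. -/
def phyloLeaves {V : Type*} [Fintype V] (G : SimpleGraph V) : Finset V :=
  Finset.univ.filter fun v => G.degree v = 1

/-- Split count `c(i,k)`: the number of leaves in the component of `T - k` containing `i`. -/
def splitC {V : Type*} [Fintype V] (G : SimpleGraph V) (i : V) (k : Sym2 V) : ℕ :=
  ((phyloLeaves G).filter fun v => (G.deleteEdges {k}).Reachable i v).card

/-- Split count `f(i,k)`: the number of leaves in the component of `T - k` not containing `i`. -/
def splitF {V : Type*} [Fintype V] (G : SimpleGraph V) (i : V) (k : Sym2 V) : ℕ :=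
  ((phyloLeaves G).filter fun v => ¬ (G.deleteEdges {k}).Reachable i v).card

/-- Phylogenetic diversity of a set `S` of leaves: the sum of the weights of all edges `e`
such that both components of `T - e` contain an element of `S`. -/
def PD {V : Type*} [Fintype V] (G : SimpleGraph V) (w : Sym2 V → ℝ) (S : Finset V) : ℝ :=
  ∑ e ∈ G.edgeFinset,
    if ∃ a ∈ S, ∃ b ∈ S, ¬ (G.deleteEdges {e}).Reachable a b then w e else 0

/-- The Shapley value of leaf `i` in the phylogenetic tree game. -/
def SV {V : Type*} [Fintype V] (G : SimpleGraph V) (w : Sym2 V → ℝ) (i : V) : ℝ :=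
  (1 / ((phyloLeaves G).card.factorial : ℝ)) *
    ∑ S ∈ (phyloLeaves G).powerset.filter (fun S => i ∈ S),
      ((S.card - 1).factorial : ℝ) * (((phyloLeaves G).card - S.card).factorial : ℝ) *
        (PD G w S - PD G w (S.erase i))

/-- The type of leaves of `G`. -/
abbrev PLeaf {V : Type*} [Fintype V] (G : SimpleGraph V) := {v : V // G.degree v = 1}

/-- The type of edges of `G`. -/
abbrev PEdge {V : Type*} (G : SimpleGraph V) := ↥G.edgeSet

/-- The Shapley transformation matrix, with rows indexed by leaves and columns by edges;
its `(i,k)` entry is `f(i,k)/(n·c(i,k))`. -/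
def shapleyMatrix {V : Type*} [Fintype V] (G : SimpleGraph V) :
    Matrix (PLeaf G) (PEdge G) ℝ := fun i k =>
  (splitF G i.1 k.1 : ℝ) / (((phyloLeaves G).card : ℝ) * (splitC G i.1 k.1 : ℝ))

/-- `pdMax G w k` is `pd_k`, the largest phylogenetic diversity achieved by a set of `k`
leaves. -/
def pdMax {V : Type*} [Fintype V] (G : SimpleGraph V) (w : Sym2 V → ℝ) (k : ℕ) : ℝ :=
  sSup (PD G w '' {W : Finset V | W ⊆ phyloLeaves G ∧ W.card = k})

/-- `x 0, x 1, …, x (k-1)` is a greedy sequence of `k` distinct leaves: the first two leaves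
are a pair of maximal `PD`-distance, and each subsequent leaf maximizes the increase in
`PD` among all remaining leaves. -/
def IsGreedySeq {V : Type*} [Fintype V] (G : SimpleGraph V) (w : Sym2 V → ℝ) (k : ℕ)
    (x : ℕ → V) : Prop :=
  (∀ j < k, x j ∈ phyloLeaves G) ∧
  (∀ j1 < k, ∀ j2 < k, x j1 = x j2 → j1 = j2) ∧
  (∀ a ∈ phyloLeaves G, ∀ b ∈ phyloLeaves G, a ≠ b →
    PD G w {a, b} ≤ PD G w {x 0, x 1}) ∧
  (∀ j, 2 ≤ j → j < k → ∀ y ∈ phyloLeaves G, y ∉ (Finset.range j).image x →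
    PD G w (insert y ((Finset.range j).image x))
      ≤ PD G w (insert (x j) ((Finset.range j).image x)))

/-!
The proof rests on Steel's exchange property: if `2 ≤ |A| < |B|`, some `b ∈ B \ A` satisfies
`PD(A) + PD(B) ≤ PD(A ∪ {b}) + PD(B \ {b})`. Take `b` such that no edge cutting `b` off from the
rest of `B` also cuts it off from a point of `A`: then every edge lost by `B \ {b}` is gained by
`A ∪ {b}`. Such a `b` exists by pigeonhole on the points of `A` lying on `b`'s side. Applied to an
optimal `j`-set and an optimal `(j+1)`-set, the exchange property shows that a best one-leaf
extension of an optimal set is optimal and that every optimal `(j+1)`-set has an optimal `j`-subset;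
both directions then follow by induction from `j = 2`.
-/

namespace SimpleGraph

variable {V : Type*} {G : SimpleGraph V}

lemma Walk.reachable_deleteEdges_or {u v : V} (p : G.Walk u v) (x y : V) :
    (G.deleteEdges {s(x, y)}).Reachable u v ∨ (G.deleteEdges {s(x, y)}).Reachable u x ∨
      (G.deleteEdges {s(x, y)}).Reachable u y := by
  induction p with
  | nil => exact .inl .rfl
  | @cons a b c hab p ih =>
    by_cases he : s(a, b) = s(x, y)
    · rcases Sym2.eq_iff.mp he with ⟨rfl, -⟩ | ⟨rfl, -⟩
      · exact .inr (.inl .rfl)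
      · exact .inr (.inr .rfl)
    · have hab' : (G.deleteEdges {s(x, y)}).Reachable a b :=
        (deleteEdges_adj.mpr ⟨hab, by simpa using he⟩).reachable
      exact ih.imp hab'.trans (Or.imp hab'.trans hab'.trans)

/-- Deleting one edge from a connected graph leaves at most two components. -/
lemma Connected.reachable_deleteEdges_of_not_reachable (hc : G.Connected) {e : Sym2 V}
    {u v w : V} (hv : ¬ (G.deleteEdges {e}).Reachable u v)
    (hw : ¬ (G.deleteEdges {e}).Reachable u w) : (G.deleteEdges {e}).Reachable v w := by
  induction e using Sym2.ind with
  | _ x y =>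
    have key : ∀ z, (G.deleteEdges {s(x, y)}).Reachable z x ∨
        (G.deleteEdges {s(x, y)}).Reachable z y := fun z => by
      obtain ⟨p⟩ := hc.preconnected z x
      rcases p.reachable_deleteEdges_or x y with h | h | h <;> tauto
    rcases key u with hu | hu <;> rcases key v with hv' | hv' <;> rcases key w with hw' | hw' <;>
      first
        | exact hv'.trans hw'.symm
        | exact absurd (hu.trans hv'.symm) hv
        | exact absurd (hu.trans hw'.symm) hw

/-- A walk of `G - f` that passes through the edge `s(x, y)` visits `x`. -/
lemma Reachable.deleteEdges_of_not_reachable {f : Sym2 V} {u v x y : V}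
    (h : (G.deleteEdges {f}).Reachable u v) (hx : ¬ (G.deleteEdges {f}).Reachable u x) :
    (G.deleteEdges {s(x, y)}).Reachable u v := by
  classical
  obtain ⟨p⟩ := h
  refine reachable_deleteEdges_iff_exists_walk.mpr
    ⟨p.mapLe (deleteEdges_le _), fun he => hx ?_⟩
  rw [Walk.edges_mapLe_eq_edges] at he
  exact ⟨p.takeUntil x (p.fst_mem_support_of_mem_edges he)⟩

end SimpleGraph

lemma Finset.image_range_two {α : Type*} [DecidableEq α] (x : ℕ → α) :
    (range 2).image x = {x 0, x 1} := by
  ext; simp [range_add_one, or_comm]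

section Exchange

variable {V : Type*} {G : SimpleGraph V}

def Separates (G : SimpleGraph V) (e : Sym2 V) (S : Finset V) : Prop :=
  ∃ a ∈ S, ∃ b ∈ S, ¬ (G.deleteEdges {e}).Reachable a b

def Isolates (G : SimpleGraph V) (e : Sym2 V) (b : V) (B : Finset V) : Prop :=
  ∀ c ∈ B, c ≠ b → ¬ (G.deleteEdges {e}).Reachable b c

lemma Separates.mono {e : Sym2 V} {S T : Finset V} (h : Separates G e S) (hST : S ⊆ T) :
    Separates G e T :=
  let ⟨a, ha, b, hb, hab⟩ := h
  ⟨a, hST ha, b, hST hb, hab⟩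

lemma Separates.isolates_of_not_separates_erase {e : Sym2 V} {B : Finset V} {b : V}
    (hB : Separates G e B) (h : ¬ Separates G e (B.erase b)) :
    Isolates G e b B := by
  intro c hc hcb hbc
  have hrep : ∀ z ∈ B, ∃ z' ∈ B.erase b, (G.deleteEdges {e}).Reachable z z' := fun z hz =>
    if hzb : z = b then ⟨c, mem_erase.mpr ⟨hcb, hc⟩, hzb ▸ hbc⟩
    else ⟨z, mem_erase.mpr ⟨hzb, hz⟩, .rfl⟩
  obtain ⟨p, hp, q, hq, hpq⟩ := hB
  obtain ⟨p', hp', hpp'⟩ := hrep p hp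
  obtain ⟨q', hq', hqq'⟩ := hrep q hq
  simp only [Separates, not_exists, not_and, not_not] at h
  exact hpq (hpp'.trans ((h p' hp' q' hq').trans hqq'.symm))

/-- Write `e = s(x, y)`. If `x` is on the side of `b'` in `G - f`, then `b` and `b''` are together
on the other side and the walk joining them in `G - f` avoids `e`; otherwise the walk from `a` to
`b'` in `G - f` avoids `e`. -/
lemma Isolates.false_of_reachable (hc : G.Connected) {B : Finset V} {e f : Sym2 V}
    {a b b' b'' : V} (he : Isolates G e b B) (hf : Isolates G f b' B) (hb : b ∈ B) (hb' : b' ∈ B)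
    (hb'' : b'' ∈ B) (hbb' : b ≠ b') (hb''b : b'' ≠ b) (hb''b' : b'' ≠ b')
    (hea : (G.deleteEdges {e}).Reachable b a) (hfa : (G.deleteEdges {f}).Reachable b' a) :
    False := by
  induction e using Sym2.ind with
  | _ x y =>
    by_cases hx : (G.deleteEdges {f}).Reachable x b'
    · have hbx : ¬ (G.deleteEdges {f}).Reachable b x := fun h =>
        hf b hb hbb' (hx.symm.trans h.symm)
      have hbb'' : (G.deleteEdges {f}).Reachable b b'' :=
        hc.reachable_deleteEdges_of_not_reachable (hf b hb hbb') (hf b'' hb'' hb''b')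
      exact he b'' hb'' hb''b (hbb''.deleteEdges_of_not_reachable hbx)
    · have hax : ¬ (G.deleteEdges {f}).Reachable a x := fun h => hx (hfa.trans h).symm
      exact he b' hb' hbb'.symm (hea.trans (hfa.symm.deleteEdges_of_not_reachable hax))

lemma exists_mem_forall_isolates_not_reachable (hc : G.Connected) {A B : Finset V}
    (hB : 3 ≤ B.card) (hAB : A.card < B.card) :
    ∃ b ∈ B, b ∉ A ∧ ∀ e, Isolates G e b B → ∀ a ∈ A, ¬ (G.deleteEdges {e}).Reachable b a := by
  by_contra! hcon
  obtain ⟨v, -⟩ := card_pos.mp (by omega : 0 < B.card)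
  have : Nonempty V := ⟨v⟩
  choose! e he a haA hea using hcon
  -- `a b` lies on the side of `b` in `G - e b`, so it is not in `B`; pigeonhole on `b ↦ a b`.
  have hmaps : ∀ b ∈ B \ A, a b ∈ A \ B := fun b hb => by
    obtain ⟨hbB, hbA⟩ := mem_sdiff.mp hb
    refine mem_sdiff.mpr ⟨haA b hbB hbA, fun haB => he b hbB hbA _ haB ?_ (hea b hbB hbA)⟩
    rintro hab
    exact hbA (hab ▸ haA b hbB hbA)
  have hcard : (A \ B).card < (B \ A).card := by
    have := card_sdiff_add_card_inter A B
    have := card_sdiff_add_card_inter B A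
    rw [inter_comm] at this
    omega
  obtain ⟨b, hb, b', hb', hbb', hab⟩ := exists_ne_map_eq_of_card_lt_of_maps_to hcard hmaps
  obtain ⟨hbB, hbA⟩ := mem_sdiff.mp hb
  obtain ⟨hb'B, hb'A⟩ := mem_sdiff.mp hb'
  obtain ⟨b'', hb'', hb''b'⟩ := exists_mem_ne (s := B.erase b)
    (by rw [card_erase_of_mem hbB]; omega) b'
  obtain ⟨hb''b, hb''B⟩ := mem_erase.mp hb''
  exact (he b hbB hbA).false_of_reachable hc (he b' hb'B hb'A) hbB hb'B hb''B hbb' hb''b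
    hb''b' (hea b hbB hbA) (hab ▸ hea b' hb'B hb'A)

lemma ite_add_ite_le_ite_add_ite {α : Type*} [AddCommMonoid α] [PartialOrder α]
    [IsOrderedAddMonoid α] {P Q P' Q' : Prop} [Decidable P] [Decidable Q] [Decidable P']
    [Decidable Q'] {r : α} (hr : 0 ≤ r) (hP : P → P') (hQ : Q' → Q) (h : Q → ¬ Q' → ¬ P ∧ P') :
    (if P then r else 0) + (if Q then r else 0) ≤
      (if P' then r else 0) + (if Q' then r else 0) := by
  split_ifs <;> simp_all [le_add_of_nonneg_right]

theorem exists_PD_add_PD_le_PD_insert_add_PD_erase [Fintype V] (hc : G.Connected) {w : Sym2 V → ℝ}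
    (hw : ∀ e ∈ G.edgeSet, 0 ≤ w e) {A B : Finset V} (hA : 2 ≤ A.card) (hAB : A.card < B.card) :
    ∃ b ∈ B, b ∉ A ∧ PD G w A + PD G w B ≤ PD G w (insert b A) + PD G w (B.erase b) := by
  obtain ⟨b, hbB, hbA, hb⟩ := exists_mem_forall_isolates_not_reachable hc (by omega) hAB
  refine ⟨b, hbB, hbA, ?_⟩
  simp only [PD, ← sum_add_distrib]
  refine sum_le_sum fun e he =>
    ite_add_ite_le_ite_add_ite (hw e (SimpleGraph.mem_edgeFinset.mp he))
    (fun h => Separates.mono h (subset_insert b A))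
    (fun h => Separates.mono h (erase_subset b B)) fun hB hB' => ?_
  have hiso : Isolates G e b B := Separates.isolates_of_not_separates_erase hB hB'
  obtain ⟨a, ha⟩ := card_pos.mp (by omega : 0 < A.card)
  refine ⟨fun ⟨p, hp, q, hq, hpq⟩ => hpq ?_,
    ⟨b, mem_insert_self b A, a, mem_insert_of_mem ha, hb e hiso a ha⟩⟩
  exact hc.reachable_deleteEdges_of_not_reachable (hb e hiso p hp) (hb e hiso q hq)

end Exchange

section Optimal

variable {V : Type*} [Fintype V] {G : SimpleGraph V} {w : Sym2 V → ℝ}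

lemma le_pdMax {W : Finset V} (hW : W ⊆ phyloLeaves G) {j : ℕ} (hcard : W.card = j) :
    PD G w W ≤ pdMax G w j :=
  le_csSup ((Set.toFinite _).image _).bddAbove ⟨W, ⟨hW, hcard⟩, rfl⟩

lemma exists_PD_eq_pdMax {j : ℕ} (hj : j ≤ (phyloLeaves G).card) :
    ∃ W ⊆ phyloLeaves G, W.card = j ∧ PD G w W = pdMax G w j := by
  obtain ⟨W, hW, hcard⟩ := exists_subset_card_eq hj
  obtain ⟨W', ⟨hW', hcard'⟩, hopt⟩ := Set.Nonempty.csSup_mem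
    (⟨PD G w W, W, ⟨hW, hcard⟩, rfl⟩ : (PD G w '' {W | W ⊆ phyloLeaves G ∧ W.card = j}).Nonempty)
    ((Set.toFinite _).image _)
  exact ⟨W', hW', hcard', hopt⟩

lemma PD_eq_pdMax_iff {W : Finset V} (hW : W ⊆ phyloLeaves G) {j : ℕ} (hcard : W.card = j) :
    PD G w W = pdMax G w j ↔
      ∀ W' ⊆ phyloLeaves G, W'.card = j → PD G w W' ≤ PD G w W := by
  refine ⟨fun h W' hW' hcard' => h ▸ le_pdMax hW' hcard', fun h => ?_⟩
  obtain ⟨W', hW', hcard', hopt⟩ := exists_PD_eq_pdMax (w := w) (hcard ▸ card_le_card hW)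
  exact (le_pdMax hW hcard).antisymm (hopt ▸ h W' hW' hcard')

lemma PD_pair_eq_pdMax_two_iff {a b : V} (ha : a ∈ phyloLeaves G) (hb : b ∈ phyloLeaves G)
    (hab : a ≠ b) :
    PD G w {a, b} = pdMax G w 2 ↔ ∀ a' ∈ phyloLeaves G, ∀ b' ∈ phyloLeaves G, a' ≠ b' →
      PD G w {a', b'} ≤ PD G w {a, b} := by
  rw [PD_eq_pdMax_iff (insert_subset ha (singleton_subset_iff.mpr hb)) (card_pair hab)]
  refine ⟨fun h a' ha' b' hb' hab' => h _ ?_ (card_pair hab'), fun h W' hW' hcard' => ?_⟩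
  · exact insert_subset ha' (singleton_subset_iff.mpr hb')
  · obtain ⟨a', b', hab', rfl⟩ := card_eq_two.mp hcard'
    exact h a' (hW' (mem_insert_self _ _)) b' (hW' (mem_insert_of_mem (mem_singleton_self _))) hab'

variable (hc : G.Connected) (hw : ∀ e ∈ G.edgeSet, 0 ≤ w e)
include hc hw

theorem PD_insert_eq_pdMax_of_forall_le {A : Finset V} (hA : A ⊆ phyloLeaves G) {j : ℕ}
    (hcard : A.card = j) (hj : 2 ≤ j) (hopt : PD G w A = pdMax G w j) {y : V}
    (hy : y ∈ phyloLeaves G) (hyA : y ∉ A)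
    (hmax : ∀ z ∈ phyloLeaves G, z ∉ A → PD G w (insert z A) ≤ PD G w (insert y A)) :
    PD G w (insert y A) = pdMax G w (j + 1) := by
  have hyA' : insert y A ⊆ phyloLeaves G := insert_subset hy hA
  have hcard' : (insert y A).card = j + 1 := by rw [card_insert_of_notMem hyA, hcard]
  obtain ⟨B, hB, hBcard, hBopt⟩ := exists_PD_eq_pdMax (w := w) (hcard' ▸ card_le_card hyA')
  obtain ⟨b, hbB, hbA, hexch⟩ :=
    exists_PD_add_PD_le_PD_insert_add_PD_erase hc hw (hcard ▸ hj) (by omega : A.card < B.card)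
  have herase : PD G w (B.erase b) ≤ PD G w A :=
    hopt ▸ le_pdMax ((erase_subset b B).trans hB) (by rw [card_erase_of_mem hbB]; omega)
  have hinsert := hmax b (hB hbB) hbA
  exact (le_pdMax hyA' hcard').antisymm (by linarith)

theorem exists_PD_erase_eq_pdMax {W : Finset V} (hW : W ⊆ phyloLeaves G) {j : ℕ}
    (hcard : W.card = j + 1) (hj : 2 ≤ j) (hopt : PD G w W = pdMax G w (j + 1)) :
    ∃ b ∈ W, PD G w (W.erase b) = pdMax G w j := by
  obtain ⟨A, hA, hAcard, hAopt⟩ :=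
    exists_PD_eq_pdMax (G := G) (w := w) (j := j) (by have := card_le_card hW; omega)
  obtain ⟨b, hbW, hbA, hexch⟩ :=
    exists_PD_add_PD_le_PD_insert_add_PD_erase hc hw (hAcard ▸ hj) (by omega : A.card < W.card)
  have hinsert : PD G w (insert b A) ≤ PD G w W :=
    hopt ▸ le_pdMax (insert_subset (hW hbW) hA) (by rw [card_insert_of_notMem hbA, hAcard])
  have herase : (W.erase b).card = j := by rw [card_erase_of_mem hbW, hcard]; rfl
  exact ⟨b, hbW, (le_pdMax ((erase_subset b W).trans hW) herase).antisymm (by linarith)⟩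

end Optimal

namespace IsGreedySeq

variable {V : Type*} [Fintype V] {G : SimpleGraph V} {w : Sym2 V → ℝ} {k : ℕ} {x : ℕ → V}

lemma image_range_subset (hx : IsGreedySeq G w k x) : (range k).image x ⊆ phyloLeaves G := by
  intro v hv
  obtain ⟨i, hi, rfl⟩ := mem_image.mp hv
  exact hx.1 i (mem_range.mp hi)

lemma card_image_range (hx : IsGreedySeq G w k x) : ((range k).image x).card = k := by
  rw [card_image_of_injOn fun i hi i' hi' => hx.2.1 i (mem_range.mp hi) i' (mem_range.mp hi'),
    card_range]

lemma congr {y : ℕ → V} (hk : 2 ≤ k) (hxy : ∀ i < k, x i = y i) (hx : IsGreedySeq G w k x) :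
    IsGreedySeq G w k y := by
  have himg : ∀ i ≤ k, (range i).image x = (range i).image y := fun i hi =>
    image_congr fun m hm => hxy m (by have := mem_range.mp hm; omega)
  obtain ⟨hL, hinj, hpair, hstep⟩ := hx
  refine ⟨fun i hi => hxy i hi ▸ hL i hi, fun i hi i' hi' h => hinj i hi i' hi' ?_, ?_,
    fun i h2 hi => ?_⟩
  · rwa [hxy i hi, hxy i' hi']
  · rwa [← hxy 0 (by omega), ← hxy 1 (by omega)]
  · rw [← himg i hi.le, ← hxy i hi]
    exact hstep i h2 hi

end IsGreedySeq

section Greedy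

variable {V : Type*} [Fintype V] {G : SimpleGraph V} {w : Sym2 V → ℝ}

lemma isGreedySeq_two_iff {x : ℕ → V} :
    IsGreedySeq G w 2 x ↔ x 0 ∈ phyloLeaves G ∧ x 1 ∈ phyloLeaves G ∧ x 0 ≠ x 1 ∧
      ∀ a ∈ phyloLeaves G, ∀ b ∈ phyloLeaves G, a ≠ b → PD G w {a, b} ≤ PD G w {x 0, x 1} := by
  constructor
  · rintro ⟨hL, hinj, hpair, -⟩
    exact ⟨hL 0 (by omega), hL 1 (by omega),
      fun h => by simpa using hinj 0 (by omega) 1 (by omega) h, hpair⟩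
  · rintro ⟨h0, h1, h01, hpair⟩
    refine ⟨fun i hi => ?_, fun i hi i' hi' h => ?_, hpair, fun i h2 hi => by omega⟩
    · interval_cases i <;> assumption
    · interval_cases i <;> interval_cases i' <;> simp_all

lemma isGreedySeq_succ_iff {j : ℕ} (hj : 2 ≤ j) {x : ℕ → V} :
    IsGreedySeq G w (j + 1) x ↔ IsGreedySeq G w j x ∧ x j ∈ phyloLeaves G ∧
      x j ∉ (range j).image x ∧ ∀ y ∈ phyloLeaves G, y ∉ (range j).image x →
        PD G w (insert y ((range j).image x)) ≤ PD G w (insert (x j) ((range j).image x)) := by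
  constructor
  · rintro ⟨hL, hinj, hpair, hstep⟩
    refine ⟨⟨fun i hi => hL i (by omega), fun i hi i' hi' => hinj i (by omega) i' (by omega),
      hpair, fun i h2 hi => hstep i h2 (by omega)⟩, hL j (by omega), fun hxj => ?_,
      hstep j hj (by omega)⟩
    obtain ⟨i, hi, h⟩ := mem_image.mp hxj
    have := hinj i (by have := mem_range.mp hi; omega) j (by omega) h
    have := mem_range.mp hi
    omega
  · rintro ⟨⟨hL, hinj, hpair, hstep⟩, hxj, hxj', hmax⟩
    have hne : ∀ i < j, x i ≠ x j := fun i hi h =>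
      hxj' (mem_image.mpr ⟨i, mem_range.mpr hi, h⟩)
    refine ⟨fun i hi => ?_, fun i hi i' hi' h => ?_, hpair, fun i h2 hi => ?_⟩
    · obtain hi | rfl := Nat.lt_succ_iff_lt_or_eq.mp hi
      exacts [hL i hi, hxj]
    · obtain hi | rfl := Nat.lt_succ_iff_lt_or_eq.mp hi <;>
        obtain hi' | rfl := Nat.lt_succ_iff_lt_or_eq.mp hi'
      exacts [hinj i hi i' hi' h, absurd h (hne i hi), absurd h.symm (hne i' hi'), rfl]
    · obtain hi | rfl := Nat.lt_succ_iff_lt_or_eq.mp hi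
      exacts [hstep i h2 hi, hmax]

variable (hc : G.Connected) (hw : ∀ e ∈ G.edgeSet, 0 ≤ w e)
include hc hw

theorem IsGreedySeq.PD_eq_pdMax {k : ℕ} (hk : 2 ≤ k) {x : ℕ → V} (hx : IsGreedySeq G w k x) :
    PD G w ((range k).image x) = pdMax G w k := by
  induction k, hk using Nat.le_induction with
  | base =>
    obtain ⟨h0, h1, h01, hpair⟩ := isGreedySeq_two_iff.mp hx
    rw [image_range_two, PD_pair_eq_pdMax_two_iff h0 h1 h01]
    exact hpair
  | succ j hj ih =>
    obtain ⟨hxj, hL, hnotin, hmax⟩ := (isGreedySeq_succ_iff hj).mp hx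
    rw [range_add_one, image_insert]
    exact PD_insert_eq_pdMax_of_forall_le hc hw hxj.image_range_subset hxj.card_image_range hj
      (ih hxj) hL hnotin hmax

theorem exists_isGreedySeq_of_PD_eq_pdMax {k : ℕ} (hk : 2 ≤ k) {W : Finset V}
    (hW : W ⊆ phyloLeaves G) (hcard : W.card = k) (hopt : PD G w W = pdMax G w k) :
    ∃ x : ℕ → V, IsGreedySeq G w k x ∧ (range k).image x = W := by
  induction k, hk using Nat.le_induction generalizing W with
  | base =>
    obtain ⟨a, b, hab, rfl⟩ := card_eq_two.mp hcard
    have ha := hW (mem_insert_self a {b})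
    have hb := hW (mem_insert_of_mem (mem_singleton_self b))
    refine ⟨fun i => if i = 0 then a else b, isGreedySeq_two_iff.mpr ?_, image_range_two _⟩
    simpa [ha, hb, hab] using (PD_pair_eq_pdMax_two_iff ha hb hab).mp hopt
  | succ j hj ih =>
    obtain ⟨b, hbW, hopt'⟩ := exists_PD_erase_eq_pdMax hc hw hW hcard hj hopt
    have hW' : W.erase b ⊆ phyloLeaves G := (erase_subset b W).trans hW
    have hcard' : (W.erase b).card = j := by rw [card_erase_of_mem hbW, hcard]; rfl
    obtain ⟨x, hx, hxW⟩ := ih hW' hcard' hopt'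
    have hbelow : ∀ i < j, x i = Function.update x j b i := fun i hi =>
      (Function.update_of_ne (by omega) _ _).symm
    have himg : (range j).image (Function.update x j b) = W.erase b := by
      rw [← hxW]; exact image_congr fun i hi => (hbelow i (mem_range.mp hi)).symm
    refine ⟨Function.update x j b, (isGreedySeq_succ_iff hj).mpr ⟨hx.congr hj hbelow, ?_⟩, ?_⟩
    · rw [himg, Function.update_self, insert_erase hbW]
      refine ⟨hW hbW, notMem_erase b W, fun y hy hyW => hopt ▸ le_pdMax (insert_subset hy hW') ?_⟩
      rw [card_insert_of_notMem hyW, hcard']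
    · rw [range_add_one, image_insert, himg, Function.update_self, insert_erase hbW]

end Greedy

theorem greedy_solves_pd_optimization_general {V : Type*} [Fintype V] (G : SimpleGraph V)
    (hT : G.IsTree)
    (w : Sym2 V → ℝ) (hw : ∀ e ∈ G.edgeSet, 0 < w e)
    (k : ℕ) (hk2 : 2 ≤ k) :
    (∀ x : ℕ → V, IsGreedySeq G w k x →
      PD G w ((Finset.range k).image x) = pdMax G w k) ∧
    (∀ W : Finset V, W ⊆ phyloLeaves G → W.card = k → PD G w W = pdMax G w k →
      ∃ x : ℕ → V, IsGreedySeq G w k x ∧ (Finset.range k).image x = W) := by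
  have hw' : ∀ e ∈ G.edgeSet, 0 ≤ w e := fun e he => (hw e he).le
  exact ⟨fun x hx => hx.PD_eq_pdMax hT.connected hw' hk2,
    fun W hW hcard hopt => exists_isGreedySeq_of_PD_eq_pdMax hT.connected hw' hk2 hW hcard hopt⟩

/-- (Steel 2005, greedy algorithm.) In a phylogenetic tree with strictly
positive edge weights, for `2 ≤ k ≤ n` every greedy sequence of `k` leaves realizes the
maximum diversity `pd_k`, and conversely every `k`-set of leaves of maximal diversity can be
ordered as a greedy sequence. -/
theorem greedy_solves_pd_optimization {V : Type*} [Fintype V] (G : SimpleGraph V)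
    (hT : G.IsTree) (hdeg : ∀ v, G.degree v = 1 ∨ G.degree v = 3)
    (w : Sym2 V → ℝ) (hw : ∀ e ∈ G.edgeSet, 0 < w e)
    (k : ℕ) (hk2 : 2 ≤ k) (hkn : k ≤ (phyloLeaves G).card) :
    (∀ x : ℕ → V, IsGreedySeq G w k x →
      PD G w ((Finset.range k).image x) = pdMax G w k) ∧
    (∀ W : Finset V, W ⊆ phyloLeaves G → W.card = k → PD G w W = pdMax G w k →
      ∃ x : ℕ → V, IsGreedySeq G w k x ∧ (Finset.range k).image x = W) :=
  greedy_solves_pd_optimization_general G hT w hw k hk2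
end
end

section
/- Let k ≥ 2 and let T_ε be an unrooted binary phylogenetic tree on n = 2k+1 leaves having an edge e whose deletion leaves a component with k leaves (leaf set L1) and a component with k+1 leaves (leaf set L2). For ε > 0, assign weight 1/ε to e, weight ε/(2k−2) to each of the 2k−2 edges on the L1 side, and weight ε/(2k) to each of the 2k edges on the L2 side. Then for every leaf i ∈ L1, the Shapley value satisfies SV_i ≥ (k+1)/(ε·(2k²+k)) + ε/(2k²+k). -/
/-!
Linearity of the Shapley value in the edge weights gives `SV_i = ∑_e w_e f(i,e) / (n c(i,e))`,
where `c(i,e)` and `f(i,e)` count the leaves on the side of `e` containing `i` and on the other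
side. Indeed, joining a coalition `T ∌ i` adds `e` to its phylogenetic diversity exactly when `T`
is a nonempty set of leaves beyond `e`, and summing the Shapley weights `|T|! (n-1-|T|)!` over such
`T` is a hockey-stick identity.

In `T_ε` the central edge contributes `(1/ε) (k+1) / (n k)`. Every other edge has `f ≥ 1` and
`c ≤ n - 1`, hence contributes at least `w_e / (n (n-1))`, and these edges carry total weight
`2ε`: in a binary tree the side of an edge with `m` leaves contains `2m - 2` edges.
-/

open Finset

noncomputable section
open scoped Classical

open scoped Nat

namespace SimpleGraph

variable {V : Type*} {G : SimpleGraph V}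

theorem not_reachable_deleteEdges_of_adj (hG : G.IsAcyclic) {x y : V} (h : G.Adj x y) :
    ¬ (G.deleteEdges {s(x, y)}).Reachable x y :=
  isBridge_iff.mp (isAcyclic_iff_forall_adj_isBridge.mp hG h)

theorem reachable_deleteEdges_or (hG : G.Connected) {x y : V} (h : G.Adj x y) (z : V) :
    (G.deleteEdges {s(x, y)}).Reachable x z ∨ (G.deleteEdges {s(x, y)}).Reachable y z := by
  obtain ⟨p⟩ := hG.preconnected x z
  suffices ∀ {a b : V}, G.Walk a b → ((G.deleteEdges {s(x, y)}).Reachable x a ∨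
      (G.deleteEdges {s(x, y)}).Reachable y a) → ((G.deleteEdges {s(x, y)}).Reachable x b ∨
      (G.deleteEdges {s(x, y)}).Reachable y b) from this p (Or.inl .rfl)
  intro a b q
  induction q with
  | nil => exact id
  | @cons a c b hac q ih =>
    refine fun ha => ih ?_
    by_cases hxy : s(a, c) = s(x, y)
    · rcases Sym2.eq_iff.mp hxy with ⟨rfl, rfl⟩ | ⟨rfl, rfl⟩
      exacts [Or.inr .rfl, Or.inl .rfl]
    · have hac' : (G.deleteEdges {s(x, y)}).Adj a c := by simp [hac, hxy]
      exact ha.imp (·.trans hac'.reachable) (·.trans hac'.reachable)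

theorem reachable_deleteEdges_of_not_reachable (hG : G.Connected) {e : Sym2 V}
    (he : e ∈ G.edgeSet) {i a b : V} (ha : ¬ (G.deleteEdges {e}).Reachable i a)
    (hb : ¬ (G.deleteEdges {e}).Reachable i b) : (G.deleteEdges {e}).Reachable a b := by
  induction e with
  | _ x y =>
    rcases reachable_deleteEdges_or hG he i with hi | hi <;>
    rcases reachable_deleteEdges_or hG he a with ha' | ha' <;>
    rcases reachable_deleteEdges_or hG he b with hb' | hb'
    all_goals first
      | exact ha'.symm.trans hb'
      | exact absurd (hi.symm.trans ha') ha
      | exact absurd (hi.symm.trans hb') hb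

theorem reachable_deleteEdges_iff_of_adj {e : Sym2 V} {a b : V} (h : G.Adj a b)
    (hne : s(a, b) ≠ e) (c : V) :
    (G.deleteEdges {e}).Reachable c a ↔ (G.deleteEdges {e}).Reachable c b := by
  have hab : (G.deleteEdges {e}).Adj a b := by simp [h, hne]
  exact ⟨(·.trans hab.reachable), (·.trans hab.reachable.symm)⟩

/-- A walk from `a` that never reaches `y` avoids every edge at `y`. -/
theorem Reachable.deleteEdges_of_not_reachable_s13 {e e' : Sym2 V} {a y z : V}
    (hz : (G.deleteEdges {e}).Reachable a z) (hy : ¬ (G.deleteEdges {e}).Reachable a y)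
    (hye : y ∈ e') : (G.deleteEdges {e'}).Reachable a z := by
  obtain ⟨p⟩ := hz
  refine ⟨p.transfer _ fun f hf => ?_⟩
  have hfG := p.edges_subset_edgeSet hf
  rw [edgeSet_deleteEdges] at hfG ⊢
  refine ⟨hfG.1, fun hfe => ?_⟩
  obtain ⟨c, rfl⟩ := Sym2.mem_iff_exists.mp hye
  rw [Set.mem_singleton_iff.mp hfe] at hf
  exact hy ⟨p.takeUntil _ (p.fst_mem_support_of_mem_edges hf)⟩

theorem exists_adj_reachable_deleteEdges {x y z : V} (hz : (G.deleteEdges {s(x, y)}).Reachable y z)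
    (hzy : z ≠ y) : ∃ w, G.Adj y w ∧ w ≠ x ∧ (G.deleteEdges {s(y, w)}).Reachable w z := by
  obtain ⟨p, hp⟩ := hz.exists_isPath
  cases p with
  | nil => exact absurd rfl hzy
  | @cons _ w _ hyw q =>
    rw [Walk.cons_isPath_iff] at hp
    rw [deleteEdges_adj, Set.mem_singleton_iff] at hyw
    refine ⟨w, hyw.1, fun hwx => hyw.2 (hwx ▸ Sym2.eq_swap),
      ⟨q.transfer _ fun f hf => ?_⟩⟩
    have hfG := q.edges_subset_edgeSet hf
    rw [edgeSet_deleteEdges] at hfG ⊢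
    refine ⟨hfG.1, fun hfe => hp.2 ?_⟩
    rw [Set.mem_singleton_iff.mp hfe] at hf
    exact q.fst_mem_support_of_mem_edges hf

theorem mk_ne_mk_of_adj {x y w : V} (hyw : G.Adj y w) (hwx : w ≠ x) : s(y, w) ≠ s(x, y) := by
  intro h
  rcases Sym2.eq_iff.mp h with ⟨-, rfl⟩ | ⟨-, rfl⟩
  exacts [G.irrefl hyw, hwx rfl]

theorem IsAcyclic.reachable_deleteEdges_of_adj (hG : G.IsAcyclic) {x y w z : V}
    (hyw : G.Adj y w) (hwx : w ≠ x) (hz : (G.deleteEdges {s(y, w)}).Reachable w z) :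
    (G.deleteEdges {s(x, y)}).Reachable y z := by
  have hwz : (G.deleteEdges {s(x, y)}).Reachable w z :=
    hz.deleteEdges_of_not_reachable_s13 (fun h => not_reachable_deleteEdges_of_adj hG hyw h.symm)
      (Sym2.mem_mk_right x y)
  exact (reachable_deleteEdges_iff_of_adj hyw (mk_ne_mk_of_adj hyw hwx) y).mp .rfl |>.trans hwz

theorem IsAcyclic.not_reachable_deleteEdges_of_ne (hG : G.IsAcyclic) {y w w' z : V}
    (hw : G.Adj y w) (hw' : G.Adj y w') (hne : w ≠ w')
    (hz : (G.deleteEdges {s(y, w)}).Reachable w z) :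
    ¬ (G.deleteEdges {s(y, w')}).Reachable w' z := by
  intro hz'
  have hw'z : (G.deleteEdges {s(y, w)}).Reachable w' z :=
    hz'.deleteEdges_of_not_reachable_s13 (fun h => not_reachable_deleteEdges_of_adj hG hw' h.symm)
      (Sym2.mem_mk_left y w)
  refine not_reachable_deleteEdges_of_adj hG hw
    (((reachable_deleteEdges_iff_of_adj hw' ?_ y).mp .rfl).trans (hw'z.trans hz.symm))
  rintro h
  rcases Sym2.eq_iff.mp h with ⟨-, rfl⟩ | ⟨rfl, -⟩
  exacts [hne rfl, G.irrefl hw]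

end SimpleGraph

namespace PhyloShapley

open SimpleGraph

theorem choose_mul_factorial_mul_factorial_add {f j : ℕ} (d : ℕ) (hj : j ≤ f) :
    f.choose j * (j ! * (f + d - j)!) = f ! * d ! * (f - j + d).choose d := by
  apply Nat.eq_of_mul_eq_mul_right (Nat.factorial_pos (f - j))
  calc f.choose j * (j ! * (f + d - j)!) * (f - j)!
      = f.choose j * j ! * (f - j)! * (f - j + d)! := by
        rw [show f + d - j = f - j + d by omega]; ring
    _ = f ! * ((f - j + d).choose d * (f - j)! * d !) := by
        rw [Nat.choose_mul_factorial_mul_factorial hj, Nat.add_choose_mul_factorial_mul_factorial]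
    _ = f ! * d ! * (f - j + d).choose d * (f - j)! := by ring

theorem sum_choose_mul_factorial_mul_factorial (f d : ℕ) :
    ∑ j ∈ range (f + 1), f.choose j * (j ! * (f + d - j)!) =
      f ! * d ! * (f + d + 1).choose (d + 1) := by
  rw [sum_congr rfl fun j hj =>
    choose_mul_factorial_mul_factorial_add d (Nat.lt_succ_iff.mp (mem_range.mp hj)), ← mul_sum,
    ← Nat.sum_range_add_choose]
  congr 1
  rw [← sum_range_reflect]
  refine sum_congr rfl fun j hj => ?_
  rw [show f - (f + 1 - 1 - j) = j by have := mem_range.mp hj; omega]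

theorem sum_powerset_factorial_mul_factorial {α : Type*} (B : Finset α) (d : ℕ) :
    ∑ T ∈ B.powerset, (T.card ! : ℝ) * (B.card + d - T.card)! =
      (B.card + d + 1)! / (d + 1) := by
  simp only [← Nat.cast_mul]
  rw [sum_powerset_apply_card (fun j => ((j ! * (B.card + d - j)! : ℕ) : ℝ))]
  simp only [nsmul_eq_mul, ← Nat.cast_mul, ← Nat.cast_sum,
    sum_choose_mul_factorial_mul_factorial]
  have h := Nat.add_choose_mul_factorial_mul_factorial B.card (d + 1)
  rw [Nat.factorial_succ, ← add_assoc] at h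
  rw [eq_div_iff (by positivity), ← h]
  push_cast
  ring

theorem sum_filter_mem_powerset {α β : Type*} [AddCommMonoid β] {L : Finset α} {i : α}
    (hi : i ∈ L) (g : Finset α → β) :
    ∑ S ∈ L.powerset with i ∈ S, g S = ∑ T ∈ (L.erase i).powerset, g (insert i T) := by
  rw [sum_filter, ← insert_erase hi, sum_powerset_insert (notMem_erase i L),
    erase_insert_eq_erase, erase_idem]
  simp only [mem_insert_self, if_true]
  rw [sum_eq_zero fun T hT => if_neg fun hiT => notMem_erase i L (mem_powerset.mp hT hiT),
    zero_add]

/-- `i` is pivotal for the coalition `T ∪ {i}` in the game "the coalition meets both `p` and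
`¬ p`" exactly when `T` is a nonempty set on the `¬ p` side. -/
theorem sum_shapley_bipartition {α : Type*} {L : Finset α} {p : α → Prop} [DecidablePred p]
    {i : α} (hi : i ∈ L) (hpi : p i) :
    (∑ T ∈ (L.erase i).powerset,
        if T.Nonempty ∧ ∀ b ∈ T, ¬ p b then (T.card ! : ℝ) * (L.card - 1 - T.card)! else 0)
      / L.card ! = (L.filter (¬ p ·)).card / (L.card * (L.filter p).card) := by
  set F := L.filter (¬ p ·)
  obtain ⟨d, hd⟩ : ∃ d, (L.filter p).card = d + 1 :=
    Nat.exists_eq_add_one.mpr (card_pos.mpr ⟨i, mem_filter.mpr ⟨hi, hpi⟩⟩)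
  have hn : L.card = F.card + d + 1 := by
    rw [← card_filter_add_card_filter_not p, hd]; ring
  have hsupp : ∀ T ∈ (L.erase i).powerset,
      (T.Nonempty ∧ ∀ b ∈ T, ¬ p b) ↔ T ∈ F.powerset.erase ∅ := by
    intro T hT
    simp only [mem_erase, mem_powerset, ne_eq, ← nonempty_iff_ne_empty, F, subset_iff, mem_filter]
    exact ⟨fun ⟨hne, hp⟩ =>
      ⟨hne, fun b hb => ⟨mem_of_mem_erase (mem_powerset.mp hT hb), hp b hb⟩⟩,
      fun ⟨hne, hF⟩ => ⟨hne, fun b hb => (hF hb).2⟩⟩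
  have hFi : F ⊆ L.erase i := fun b hb =>
    mem_erase.mpr ⟨fun hbi => (mem_filter.mp hb).2 (hbi ▸ hpi), (mem_filter.mp hb).1⟩
  have hFsub : F.powerset.erase ∅ ⊆ (L.erase i).powerset :=
    (erase_subset _ _).trans (powerset_mono.mpr hFi)
  rw [sum_congr rfl fun T hT => if_congr (hsupp T hT) rfl rfl, sum_ite_mem,
    inter_eq_right.mpr hFsub, sum_erase_eq_sub (empty_mem_powerset F), hn,
    show F.card + d + 1 - 1 = F.card + d by omega, sum_powerset_factorial_mul_factorial]
  simp only [card_empty, Nat.factorial_zero, Nat.cast_one, one_mul, Nat.sub_zero]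
  rw [Nat.factorial_succ (F.card + d), hd]
  push_cast
  field_simp
  ring

variable {V : Type*} [Fintype V] {G : SimpleGraph V}

abbrev Separates (G : SimpleGraph V) (e : Sym2 V) (S : Finset V) : Prop :=
  ∃ a ∈ S, ∃ b ∈ S, ¬ (G.deleteEdges {e}).Reachable a b

theorem separates_insert_and_not_iff (hG : G.Connected) {e : Sym2 V} (he : e ∈ G.edgeSet)
    (i : V) (T : Finset V) :
    Separates G e (insert i T) ∧ ¬ Separates G e T ↔
      T.Nonempty ∧ ∀ b ∈ T, ¬ (G.deleteEdges {e}).Reachable i b := by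
  constructor
  · rintro ⟨⟨a, ha, b, hb, hab⟩, hT⟩
    replace hT : ∀ a ∈ T, ∀ b ∈ T, (G.deleteEdges {e}).Reachable a b := by
      simpa [Separates] using hT
    obtain ⟨c, hc, hic⟩ : ∃ c ∈ T, ¬ (G.deleteEdges {e}).Reachable i c := by
      rcases mem_insert.mp ha with rfl | ha <;> rcases mem_insert.mp hb with hb | hb
      · exact absurd (hb ▸ .rfl) hab
      · exact ⟨b, hb, hab⟩
      · exact ⟨a, ha, fun h => hab (hb ▸ h.symm)⟩
      · exact absurd (hT a ha b hb) hab
    exact ⟨⟨c, hc⟩, fun b hb hib => hic (hib.trans (hT b hb c hc))⟩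
  · rintro ⟨⟨b, hb⟩, hT⟩
    exact ⟨⟨i, mem_insert_self i T, b, mem_insert_of_mem hb, hT b hb⟩,
      fun ⟨a, ha, c, hc, hac⟩ =>
        hac (reachable_deleteEdges_of_not_reachable hG he (hT a ha) (hT c hc))⟩

theorem PD_insert_sub_PD (hG : G.Connected) (w : Sym2 V → ℝ) (i : V) (T : Finset V) :
    PD G w (insert i T) - PD G w T = ∑ e ∈ G.edgeFinset,
      if T.Nonempty ∧ ∀ b ∈ T, ¬ (G.deleteEdges {e}).Reachable i b then w e else 0 := by
  rw [PD, PD, ← sum_sub_distrib]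
  refine sum_congr rfl fun e he => ?_
  have hiff := separates_insert_and_not_iff hG (mem_edgeFinset.mp he) i T
  by_cases hT : Separates G e T
  · have hI : Separates G e (insert i T) :=
      let ⟨a, ha, b, hb, hab⟩ := hT
      ⟨a, mem_insert_of_mem ha, b, mem_insert_of_mem hb, hab⟩
    rw [if_pos hI, if_pos hT, if_neg fun h => (hiff.mpr h).2 hT, sub_self]
  · by_cases hI : Separates G e (insert i T)
    · rw [if_pos hI, if_neg hT, if_pos (hiff.mp ⟨hI, hT⟩), sub_zero]
    · rw [if_neg hI, if_neg hT, if_neg fun h => hI (hiff.mpr h).1, sub_zero]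

theorem SV_eq_sum_mul_splitF_div (hG : G.Connected) (w : Sym2 V → ℝ) {i : V}
    (hi : i ∈ phyloLeaves G) :
    SV G w i = ∑ e ∈ G.edgeFinset,
      w e * (splitF G i e / ((phyloLeaves G).card * splitC G i e)) := by
  have hterm : ∀ T ∈ ((phyloLeaves G).erase i).powerset,
      (((insert i T).card - 1)! : ℝ) * ((phyloLeaves G).card - (insert i T).card)! *
        (PD G w (insert i T) - PD G w ((insert i T).erase i)) =
      ∑ e ∈ G.edgeFinset,
        w e * if T.Nonempty ∧ ∀ b ∈ T, ¬ (G.deleteEdges {e}).Reachable i b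
        then (T.card ! : ℝ) * ((phyloLeaves G).card - 1 - T.card)! else 0 := by
    intro T hT
    have hiT : i ∉ T := fun h => notMem_erase i _ (mem_powerset.mp hT h)
    rw [erase_insert hiT, PD_insert_sub_PD hG, card_insert_of_notMem hiT, Nat.add_sub_cancel,
      Nat.sub_add_eq, Nat.sub_right_comm, mul_sum]
    refine sum_congr rfl fun e _ => ?_
    split_ifs <;> ring
  rw [SV, sum_filter_mem_powerset hi, sum_congr rfl hterm, sum_comm, mul_sum]
  refine sum_congr rfl fun e _ => ?_
  rw [← mul_sum, mul_left_comm, one_div_mul_eq_div, splitF, splitC,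
    ← sum_shapley_bipartition hi (p := fun v => (G.deleteEdges {e}).Reachable i v) .rfl]
  -- the two sums differ only in the `Decidable` instances of their `if` conditions
  congr!

def sideLeaves (G : SimpleGraph V) (e : Sym2 V) (y : V) : Finset V :=
  (phyloLeaves G).filter fun z => (G.deleteEdges {e}).Reachable y z

def sideEdges (G : SimpleGraph V) (e : Sym2 V) (y : V) : Finset (Sym2 V) :=
  G.edgeFinset.filter fun f => ∀ z ∈ f, (G.deleteEdges {e}).Reachable y z

theorem eq_of_reachable_deleteEdges_of_degree_eq_one {x y z : V} (hxy : G.Adj x y)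
    (hy : G.degree y = 1) (hz : (G.deleteEdges {s(x, y)}).Reachable y z) : z = y := by
  by_contra hzy
  obtain ⟨w, hyw, hwx, -⟩ := exists_adj_reachable_deleteEdges hz hzy
  obtain ⟨_, -, huniq⟩ := degree_eq_one_iff_existsUnique_adj.mp hy
  exact hwx ((huniq w hyw).trans (huniq x hxy.symm).symm)

theorem sideLeaves_of_degree_eq_one {x y : V} (hxy : G.Adj x y) (hy : G.degree y = 1) :
    sideLeaves G s(x, y) y = {y} := by
  refine eq_singleton_iff_unique_mem.mpr ⟨?_, fun z hz =>
    eq_of_reachable_deleteEdges_of_degree_eq_one hxy hy (mem_filter.mp hz).2⟩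
  simp [sideLeaves, phyloLeaves, hy]

theorem sideEdges_of_degree_eq_one {x y : V} (hxy : G.Adj x y) (hy : G.degree y = 1) :
    sideEdges G s(x, y) y = ∅ := by
  refine eq_empty_iff_forall_notMem.mpr fun f hf => ?_
  rw [sideEdges, mem_filter, mem_edgeFinset] at hf
  induction f with
  | _ a b =>
    have ha := eq_of_reachable_deleteEdges_of_degree_eq_one hxy hy (hf.2 a (Sym2.mem_mk_left a b))
    have hb := eq_of_reachable_deleteEdges_of_degree_eq_one hxy hy (hf.2 b (Sym2.mem_mk_right a b))
    subst ha hb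
    exact G.irrefl hf.1

theorem reachable_deleteEdges_iff_exists_mem (hG : G.IsAcyclic) {x y z : V} (hzy : z ≠ y) :
    (G.deleteEdges {s(x, y)}).Reachable y z ↔
      ∃ w ∈ (G.neighborFinset y).erase x, (G.deleteEdges {s(y, w)}).Reachable w z := by
  constructor
  · intro hz
    obtain ⟨w, hyw, hwx, hwz⟩ := exists_adj_reachable_deleteEdges hz hzy
    exact ⟨w, mem_erase.mpr ⟨hwx, (mem_neighborFinset G y w).mpr hyw⟩, hwz⟩
  · rintro ⟨w, hw, hwz⟩
    obtain ⟨hwx, hyw⟩ := mem_erase.mp hw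
    exact hG.reachable_deleteEdges_of_adj ((mem_neighborFinset G y w).mp hyw) hwx hwz

theorem sideLeaves_eq_biUnion (hG : G.IsAcyclic) {x y : V} (hy : G.degree y ≠ 1) :
    sideLeaves G s(x, y) y =
      ((G.neighborFinset y).erase x).biUnion fun w => sideLeaves G s(y, w) w := by
  ext z
  simp only [sideLeaves, mem_biUnion, mem_filter]
  constructor
  · rintro ⟨hz, hyz⟩
    have hzy : z ≠ y := by
      rintro rfl
      exact hy (mem_filter.mp hz).2
    obtain ⟨w, hw, hwz⟩ := (reachable_deleteEdges_iff_exists_mem hG hzy).mp hyz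
    exact ⟨w, hw, hz, hwz⟩
  · rintro ⟨w, hw, hz, hwz⟩
    refine ⟨hz, ?_⟩
    obtain ⟨hwx, hyw⟩ := mem_erase.mp hw
    exact hG.reachable_deleteEdges_of_adj ((mem_neighborFinset G y w).mp hyw) hwx hwz

theorem sideEdges_eq_union (hG : G.IsAcyclic) {x y : V} (hxy : G.Adj x y) :
    sideEdges G s(x, y) y = ((G.neighborFinset y).erase x).image (fun w => s(y, w)) ∪
      ((G.neighborFinset y).erase x).biUnion fun w => sideEdges G s(y, w) w := by
  ext f
  simp only [sideEdges, mem_union, mem_image, mem_biUnion, mem_filter, mem_erase,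
    mem_neighborFinset, mem_edgeFinset]
  constructor
  · rintro ⟨hf, hfy⟩
    by_cases hyf : y ∈ f
    · obtain ⟨c, rfl⟩ := Sym2.mem_iff_exists.mp hyf
      refine Or.inl ⟨c, ⟨?_, hf⟩, rfl⟩
      rintro rfl
      exact not_reachable_deleteEdges_of_adj hG hxy (hfy c (Sym2.mem_mk_right y c)).symm
    · induction f with
      | _ a b =>
        have hay : a ≠ y := fun h => hyf (h ▸ Sym2.mem_mk_left a b)
        have hby : b ≠ y := fun h => hyf (h ▸ Sym2.mem_mk_right a b)
        obtain ⟨w, hw, hwa⟩ :=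
          (reachable_deleteEdges_iff_exists_mem hG hay).mp (hfy a (Sym2.mem_mk_left a b))
        refine Or.inr ⟨w, mem_erase.mp hw |>.imp_right (mem_neighborFinset G y w).mp, hf,
          fun z hz => ?_⟩
        have hne : s(a, b) ≠ s(y, w) := fun h => by
          rcases Sym2.eq_iff.mp h with ⟨h, -⟩ | ⟨-, h⟩
          exacts [hay h, hby h]
        rcases Sym2.mem_iff.mp hz with rfl | rfl
        exacts [hwa, (reachable_deleteEdges_iff_of_adj hf hne w).mp hwa]
  · rintro (⟨w, ⟨hwx, hyw⟩, rfl⟩ | ⟨w, ⟨hwx, hyw⟩, hf, hwf⟩)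
    · refine ⟨hyw, fun z hz => ?_⟩
      rcases Sym2.mem_iff.mp hz with rfl | rfl
      · exact .rfl
      · exact (reachable_deleteEdges_iff_of_adj hyw (mk_ne_mk_of_adj hyw hwx) _).mp .rfl
    · exact ⟨hf, fun z hz => hG.reachable_deleteEdges_of_adj hyw hwx (hwf z hz)⟩

theorem pairwiseDisjoint_sideLeaves (hG : G.IsAcyclic) (y : V) (s : Finset V)
    (hs : s ⊆ G.neighborFinset y) :
    (s : Set V).PairwiseDisjoint fun w => sideLeaves G s(y, w) w := by
  intro w hw w' hw' hne
  refine disjoint_left.mpr fun z hz hz' => ?_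
  exact hG.not_reachable_deleteEdges_of_ne ((mem_neighborFinset G y w).mp (hs hw))
    ((mem_neighborFinset G y w').mp (hs hw')) hne (mem_filter.mp hz).2 (mem_filter.mp hz').2

theorem pairwiseDisjoint_sideEdges (hG : G.IsAcyclic) (y : V) (s : Finset V)
    (hs : s ⊆ G.neighborFinset y) :
    (s : Set V).PairwiseDisjoint fun w => sideEdges G s(y, w) w := by
  intro w hw w' hw' hne
  refine disjoint_left.mpr fun f hf hf' => ?_
  induction f with
  | _ a b =>
    exact hG.not_reachable_deleteEdges_of_ne ((mem_neighborFinset G y w).mp (hs hw))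
      ((mem_neighborFinset G y w').mp (hs hw')) hne
      ((mem_filter.mp hf).2 a (Sym2.mem_mk_left a b))
      ((mem_filter.mp hf').2 a (Sym2.mem_mk_left a b))

theorem mk_notMem_sideEdges (hG : G.IsAcyclic) {y w : V} (hyw : G.Adj y w) (w' : V) :
    s(y, w') ∉ sideEdges G s(y, w) w := fun h =>
  not_reachable_deleteEdges_of_adj hG hyw ((mem_filter.mp h).2 y (Sym2.mem_mk_left y w')).symm

theorem card_reachable_deleteEdges_lt (hG : G.IsAcyclic) {x y w : V} (hyw : G.Adj y w)
    (hwx : w ≠ x) :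
    (univ.filter fun z => (G.deleteEdges {s(y, w)}).Reachable w z).card <
      (univ.filter fun z => (G.deleteEdges {s(x, y)}).Reachable y z).card := by
  refine card_lt_card <| (ssubset_iff_of_subset fun z hz => ?_).mpr ⟨y, ?_, ?_⟩
  · simp only [mem_filter, mem_univ, true_and] at hz ⊢
    exact hG.reachable_deleteEdges_of_adj hyw hwx hz
  · simp
  · simpa using fun h => not_reachable_deleteEdges_of_adj hG hyw h.symm

theorem card_sideEdges_add_two (hG : G.IsAcyclic) (hdeg : ∀ v, G.degree v = 1 ∨ G.degree v = 3)
    {x y : V} (hxy : G.Adj x y) :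
    (sideEdges G s(x, y) y).card + 2 = 2 * (sideLeaves G s(x, y) y).card := by
  induction hn : (univ.filter fun z => (G.deleteEdges {s(x, y)}).Reachable y z).card
    using Nat.strong_induction_on generalizing x y with
  | _ n ih =>
    rcases hdeg y with hy | hy
    · rw [sideEdges_of_degree_eq_one hxy hy, sideLeaves_of_degree_eq_one hxy hy]
      rfl
    set N := (G.neighborFinset y).erase x
    have hNy : N ⊆ G.neighborFinset y := erase_subset x _
    have hN : N.card = 2 := by
      rw [card_erase_of_mem ((mem_neighborFinset G y x).mpr hxy.symm),
        card_neighborFinset_eq_degree, hy]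
    have hrec : ∀ w ∈ N, (sideEdges G s(y, w) w).card + 2 = 2 * (sideLeaves G s(y, w) w).card :=
      fun w hw => by
        obtain ⟨hwx, hyw⟩ := mem_erase.mp hw
        rw [mem_neighborFinset] at hyw
        exact ih _ (hn ▸ card_reachable_deleteEdges_lt hG hyw hwx) hyw rfl
    have hL : (sideLeaves G s(x, y) y).card = ∑ w ∈ N, (sideLeaves G s(y, w) w).card := by
      rw [sideLeaves_eq_biUnion hG (by omega),
        card_biUnion (pairwiseDisjoint_sideLeaves hG y N hNy)]
    have hE :
        (sideEdges G s(x, y) y).card = N.card + ∑ w ∈ N, (sideEdges G s(y, w) w).card := by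
      rw [sideEdges_eq_union hG hxy, card_union_of_disjoint, card_image_of_injective _
        (fun _ _ h => Sym2.congr_right.mp h), card_biUnion (pairwiseDisjoint_sideEdges hG y N hNy)]
      refine disjoint_left.mpr fun f hf hf' => ?_
      obtain ⟨w', -, rfl⟩ := mem_image.mp hf
      obtain ⟨w, hw, hf'⟩ := mem_biUnion.mp hf'
      exact mk_notMem_sideEdges hG ((mem_neighborFinset G y w).mp (hNy hw)) w' hf'
    have hsum := sum_congr rfl hrec
    rw [sum_add_distrib, sum_const, ← mul_sum, smul_eq_mul, hN] at hsum
    omega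

theorem ne_of_mem_sideEdges (hG : G.IsAcyclic) {x y z : V} (hxy : G.Adj x y) {e : Sym2 V}
    (he : e ∈ sideEdges G s(x, y) z) : e ≠ s(x, y) := by
  rintro rfl
  have hz := (mem_filter.mp he).2
  exact not_reachable_deleteEdges_of_adj hG hxy
    ((hz x (Sym2.mem_mk_left x y)).symm.trans (hz y (Sym2.mem_mk_right x y)))

theorem edgeFinset_erase_eq_union (hG : G.IsTree) {x y : V} (hxy : G.Adj x y) :
    G.edgeFinset.erase s(x, y) = sideEdges G s(x, y) x ∪ sideEdges G s(x, y) y := by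
  ext e
  refine ⟨fun he => ?_, fun he => ?_⟩
  · obtain ⟨hne, he⟩ := mem_erase.mp he
    induction e using Sym2.ind with
    | h a b =>
      have hab := reachable_deleteEdges_iff_of_adj (mem_edgeFinset.mp he) hne
      have hside : ∀ c, (G.deleteEdges {s(x, y)}).Reachable c a →
          s(a, b) ∈ sideEdges G s(x, y) c := fun c hc =>
        mem_filter.mpr ⟨he, fun z hz => by
          rcases Sym2.mem_iff.mp hz with rfl | rfl
          exacts [hc, (hab c).mp hc]⟩
      exact mem_union.mpr <| (reachable_deleteEdges_or hG.connected hxy a).imp (hside x) (hside y)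
  · rcases mem_union.mp he with he | he <;>
      exact mem_erase.mpr ⟨ne_of_mem_sideEdges hG.isAcyclic hxy he, (mem_filter.mp he).1⟩

theorem disjoint_sideEdges (hG : G.IsAcyclic) {x y : V} (hxy : G.Adj x y) :
    Disjoint (sideEdges G s(x, y) x) (sideEdges G s(x, y) y) := by
  refine disjoint_left.mpr fun e hx hy => ?_
  induction e with
  | _ a b =>
    exact not_reachable_deleteEdges_of_adj hG hxy
      (((mem_filter.mp hx).2 a (Sym2.mem_mk_left a b)).trans
        ((mem_filter.mp hy).2 a (Sym2.mem_mk_left a b)).symm)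

theorem splitC_add_splitF (G : SimpleGraph V) (i : V) (e : Sym2 V) :
    splitC G i e + splitF G i e = (phyloLeaves G).card :=
  card_filter_add_card_filter_not _

theorem splitC_eq_card_sideLeaves {e : Sym2 V} {u i : V}
    (h : (G.deleteEdges {e}).Reachable u i) : splitC G i e = (sideLeaves G e u).card :=
  congrArg card <| filter_congr fun _ _ => ⟨h.trans, h.symm.trans⟩

theorem card_sideLeaves_le_splitF (hG : G.IsAcyclic) {x y i : V} (hxy : G.Adj x y)
    (hi : (G.deleteEdges {s(x, y)}).Reachable x i) :
    (sideLeaves G s(x, y) y).card ≤ splitF G i s(x, y) :=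
  card_le_card fun _ hz => mem_filter.mpr ⟨(mem_filter.mp hz).1, fun hiz =>
    not_reachable_deleteEdges_of_adj hG hxy (hi.trans (hiz.trans (mem_filter.mp hz).2.symm))⟩

theorem one_le_splitF (hG : G.IsTree) (hdeg : ∀ v, G.degree v = 1 ∨ G.degree v = 3)
    {e : Sym2 V} (he : e ∈ G.edgeSet) (i : V) : 1 ≤ splitF G i e := by
  induction e using Sym2.ind with
  | h x y =>
    rw [mem_edgeSet] at he
    rcases reachable_deleteEdges_or hG.connected he i with hi | hi
    · have := card_sideEdges_add_two hG.isAcyclic hdeg he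
      have := card_sideLeaves_le_splitF hG.isAcyclic he hi
      omega
    · rw [Sym2.eq_swap] at hi ⊢
      have := card_sideEdges_add_two hG.isAcyclic hdeg (G.adj_symm he)
      have := card_sideLeaves_le_splitF hG.isAcyclic (G.adj_symm he) hi
      omega

theorem one_div_le_splitF_div (hG : G.IsTree) (hdeg : ∀ v, G.degree v = 1 ∨ G.degree v = 3)
    {e : Sym2 V} (he : e ∈ G.edgeSet) {i : V} (hi : i ∈ phyloLeaves G) :
    1 / ((phyloLeaves G).card * ((phyloLeaves G).card - 1 : ℝ)) ≤
      splitF G i e / ((phyloLeaves G).card * splitC G i e) := by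
  have hF : (1 : ℝ) ≤ splitF G i e := by exact_mod_cast one_le_splitF hG hdeg he i
  have hC : (1 : ℝ) ≤ splitC G i e := by
    exact_mod_cast card_pos.mpr ⟨i, mem_filter.mpr ⟨hi, Reachable.rfl⟩⟩
  have hn : (splitC G i e : ℝ) + splitF G i e = (phyloLeaves G).card := by
    exact_mod_cast splitC_add_splitF G i e
  have hCpos : (0 : ℝ) < (phyloLeaves G).card * splitC G i e := by nlinarith
  calc 1 / ((phyloLeaves G).card * ((phyloLeaves G).card - 1 : ℝ))
      ≤ 1 / ((phyloLeaves G).card * splitC G i e) :=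
        one_div_le_one_div_of_le hCpos (mul_le_mul_of_nonneg_left (by linarith) (by linarith))
    _ ≤ splitF G i e / ((phyloLeaves G).card * splitC G i e) :=
        div_le_div_of_nonneg_right hF hCpos.le

theorem mul_card_div_le_sum_mul_splitF_div (hG : G.IsTree)
    (hdeg : ∀ v, G.degree v = 1 ∨ G.degree v = 3) (w : Sym2 V → ℝ) {i : V}
    (hi : i ∈ phyloLeaves G) {s : Finset (Sym2 V)} (hs : s ⊆ G.edgeFinset) {a : ℝ}
    (ha : 0 ≤ a) (hw : ∀ e ∈ s, w e = a) :
    a * (s.card / ((phyloLeaves G).card * ((phyloLeaves G).card - 1 : ℝ))) ≤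
      ∑ e ∈ s, w e * (splitF G i e / ((phyloLeaves G).card * splitC G i e)) := by
  rw [sum_congr rfl fun e he => by rw [hw e he], ← mul_sum, ← mul_one_div (s.card : ℝ),
    ← nsmul_eq_mul]
  exact mul_le_mul_of_nonneg_left (card_nsmul_le_sum _ _ _ fun e he =>
    one_div_le_splitF_div hG hdeg (mem_edgeFinset.mp (hs he)) hi) ha

end PhyloShapley

open PhyloShapley SimpleGraph

/-- In the tree `T_ε` (a central edge `e = {u,v}` of weight `1/ε`
separating a subtree with `k` leaves `L1` whose `2k−2` edges have weight `ε/(2k−2)`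
from a subtree with `k+1` leaves `L2` whose `2k` edges have weight `ε/(2k)`), every leaf
`i ∈ L1` satisfies `SV_i ≥ (k+1)/(ε(2k²+k)) + ε/(2k²+k)`. -/
theorem shapley_lower_bound_L1
    {V : Type*} [Fintype V] (G : SimpleGraph V)
    (hT : G.IsTree) (hdeg : ∀ v, G.degree v = 1 ∨ G.degree v = 3)
    (k : ℕ) (hk : 2 ≤ k) (hcard : (phyloLeaves G).card = 2 * k + 1)
    (u v : V) (huv : G.Adj u v)
    (hL1card : ((phyloLeaves G).filter
      (fun x => (G.deleteEdges {s(u, v)}).Reachable u x)).card = k)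
    (hL2card : ((phyloLeaves G).filter
      (fun x => (G.deleteEdges {s(u, v)}).Reachable v x)).card = k + 1)
    (ε : ℝ) (hε : 0 < ε)
    (w : Sym2 V → ℝ)
    (hwe : w s(u, v) = 1 / ε)
    (hw1 : ∀ e ∈ G.edgeSet, e ≠ s(u, v) →
      (∀ x, x ∈ e → (G.deleteEdges {s(u, v)}).Reachable u x) →
      w e = ε / (2 * (k : ℝ) - 2))
    (hw2 : ∀ e ∈ G.edgeSet, e ≠ s(u, v) →
      (∀ x, x ∈ e → (G.deleteEdges {s(u, v)}).Reachable v x) →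
      w e = ε / (2 * (k : ℝ))) :
    ∀ i ∈ (phyloLeaves G).filter (fun x => (G.deleteEdges {s(u, v)}).Reachable u x),
      ((k : ℝ) + 1) / (ε * (2 * (k : ℝ) ^ 2 + k)) + ε / (2 * (k : ℝ) ^ 2 + k)
        ≤ SV G w i := by
  intro i hi
  obtain ⟨hiL, hui⟩ := mem_filter.mp hi
  have hC : splitC G i s(u, v) = k := (splitC_eq_card_sideLeaves hui).trans hL1card
  have hF : splitF G i s(u, v) = k + 1 := by have := splitC_add_splitF G i s(u, v); omega
  have hEu := card_sideEdges_add_two hT.isAcyclic hdeg huv.symm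
  have hEv := card_sideEdges_add_two hT.isAcyclic hdeg huv
  rw [Sym2.eq_swap, sideLeaves, hL1card] at hEu
  rw [sideLeaves, hL2card] at hEv
  have hbound (y : V) {a : ℝ} (ha : 0 ≤ a) (hw : ∀ e ∈ G.edgeSet, e ≠ s(u, v) →
      (∀ x ∈ e, (G.deleteEdges {s(u, v)}).Reachable y x) → w e = a) :=
    mul_card_div_le_sum_mul_splitF_div hT hdeg w hiL (s := sideEdges G s(u, v) y)
      (filter_subset _ _) ha fun e he =>
      hw e (mem_edgeFinset.mp (mem_filter.mp he).1) (ne_of_mem_sideEdges hT.isAcyclic huv he)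
        (mem_filter.mp he).2
  have hkR : (2 : ℝ) ≤ k := by exact_mod_cast hk
  have hu := hbound u (by apply div_nonneg <;> linarith) hw1
  have hv := hbound v (by positivity) hw2
  rw [show (sideEdges G s(u, v) u).card = 2 * k - 2 by omega, hcard, Nat.cast_sub (by omega)] at hu
  rw [show (sideEdges G s(u, v) v).card = 2 * k by omega, hcard] at hv
  rw [SV_eq_sum_mul_splitF_div hT.connected w hiL,
    ← add_sum_erase _ _ (mem_edgeFinset.mpr huv : s(u, v) ∈ G.edgeFinset),
    edgeFinset_erase_eq_union hT huv, sum_union (disjoint_sideEdges hT.isAcyclic huv), hwe, hF, hC,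
    hcard]
  refine le_of_eq_of_le ?_ (add_le_add le_rfl (add_le_add hu hv))
  have : (k - 1 : ℝ) ≠ 0 := by linarith
  push_cast
  field_simp
  ring
end
end
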